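/- For nonnegative integers i ≤ l, the sum over partitions λ of length at most l of q^{|λ|} t^{λ_i} equals 1 / ((1-q)···(1-q^{i-1}) · (1-q^i t)···(1-q^l t)). -/

import Mathlib

/-!
Encoding a partition by its differences `d_k = λ_k - λ_{k+1}` (with `λ_{l+1} = 0`) identifies
partitions of length at most `l` with `ℕ^l`. Since `λ_j = ∑_{k ≥ j} d_k`, we get
`|λ| = ∑_k k d_k` and `λ_i = ∑_{k ≥ i} d_k`, so the summand is `∏_k (q^k t^[k ≥ i])^{d_k}` and the
sum is a product of `l` geometric series.
-/

open scoped BigOperators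

/-- Partitions with at most `l` parts, written as weakly decreasing
tuples of nonnegative integers of length `l`. -/
def PartLe (l : ℕ) : Type :=
  {f : Fin l → ℕ // ∀ i j : Fin l, i ≤ j → f j ≤ f i}

section GeometricSeries

variable {K : Type*} [NormedField K]

theorem summable_norm_prod_pow {n : ℕ} (x : Fin n → K) (hx : ∀ k, ‖x k‖ < 1) :
    Summable fun d : Fin n → ℕ => ‖∏ k, x k ^ d k‖ := by
  induction n with
  | zero => exact .of_finite
  | succ n ih =>
    have hgeom : Summable fun m : ℕ => ‖x 0 ^ m‖ := by
      simpa only [norm_pow] using summable_geometric_of_lt_one (norm_nonneg _) (hx 0)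
    refine (Fin.consEquiv fun _ => ℕ).summable_iff.mp ?_
    convert hgeom.mul_norm (ih (fun k => x k.succ) fun k => hx k.succ) using 2
    simp [Fin.prod_univ_succ]

theorem tsum_prod_pow [CompleteSpace K] {n : ℕ} (x : Fin n → K) (hx : ∀ k, ‖x k‖ < 1) :
    ∑' d : Fin n → ℕ, ∏ k, x k ^ d k = ∏ k, (1 - x k)⁻¹ := by
  induction n with
  | zero => simp
  | succ n ih =>
    have hgeom : Summable fun m : ℕ => ‖x 0 ^ m‖ := by
      simpa only [norm_pow] using summable_geometric_of_lt_one (norm_nonneg _) (hx 0)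
    rw [← (Fin.consEquiv fun _ => ℕ).tsum_eq, Fin.prod_univ_succ,
      ← tsum_geometric_of_norm_lt_one (hx 0), ← ih (fun k => x k.succ) fun k => hx k.succ,
      tsum_mul_tsum_of_summable_norm hgeom (summable_norm_prod_pow _ fun k => hx k.succ)]
    simp [Fin.prod_univ_succ]

end GeometricSeries

theorem prod_range_one_sub_pow_mul_ite {R : Type*} [CommRing R] (q t : R) {a l : ℕ}
    (hal : a ≤ l) :
    ∏ k ∈ Finset.range l, (1 - q ^ (k + 1) * if a ≤ k then t else 1) =
      (∏ j ∈ Finset.range a, (1 - q ^ (j + 1))) * ∏ j ∈ Finset.Icc (a + 1) l, (1 - q ^ j * t) := by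
  rw [← Finset.prod_range_mul_prod_Ico _ hal, ← Finset.Ico_add_one_right_eq_Icc,
    ← Finset.prod_Ico_add' (fun j => 1 - q ^ j * t)]
  congr 1
  · refine Finset.prod_congr rfl fun k hk => ?_
    rw [if_neg (by simpa using hk), mul_one]
  · refine Finset.prod_congr rfl fun k hk => ?_
    rw [if_pos (Finset.mem_Ico.mp hk).1]

section Partitions

variable {l : ℕ}

-- The part `λ_{m+1}` of the partition whose difference sequence is `d`.
def suffixSum (d : Fin l → ℕ) (m : ℕ) : ℕ :=
  ∑ k : Fin l with m ≤ k.val, d k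

theorem suffixSum_eq_zero_of_le (d : Fin l → ℕ) {m : ℕ} (h : l ≤ m) : suffixSum d m = 0 :=
  Finset.sum_eq_zero fun k hk => by
    simp only [Finset.mem_filter, Finset.mem_univ, true_and] at hk
    omega

theorem suffixSum_eq_add_of_lt (d : Fin l → ℕ) {m : ℕ} (h : m < l) :
    suffixSum d m = d ⟨m, h⟩ + suffixSum d (m + 1) := by
  have hsplit : (Finset.univ.filter fun k : Fin l => m ≤ k.val) =
      insert ⟨m, h⟩ (Finset.univ.filter fun k : Fin l => m + 1 ≤ k.val) := by
    ext k
    simp only [Finset.mem_filter, Finset.mem_univ, true_and, Finset.mem_insert, Fin.ext_iff]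
    omega
  rw [suffixSum, hsplit, Finset.sum_insert (by simp), suffixSum]

theorem suffixSum_antitone (d : Fin l → ℕ) : Antitone (suffixSum d) :=
  fun _ _ h =>
    Finset.sum_le_sum_of_subset (Finset.monotone_filter_right _ fun _ _ hk => h.trans hk)

theorem sum_suffixSum (d : Fin l → ℕ) : ∑ j : Fin l, suffixSum d j = ∑ k, (k + 1) * d k := by
  simp only [suffixSum, Finset.sum_filter]
  rw [Finset.sum_comm]
  refine Finset.sum_congr rfl fun k _ => ?_
  rw [← Finset.sum_filter, Finset.sum_const, smul_eq_mul]
  simp only [← Fin.le_def, Finset.filter_ge_eq_Iic, Fin.card_Iic]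

theorem pow_suffixSum {M : Type*} [CommMonoid M] (x : M) (d : Fin l → ℕ) (m : ℕ) :
    x ^ suffixSum d m = ∏ k, (if m ≤ k.val then x else 1) ^ d k := by
  rw [suffixSum, ← Finset.prod_pow_eq_pow_sum, Finset.prod_filter]
  simp [ite_pow]

namespace PartLe

def extend (p : PartLe l) (m : ℕ) : ℕ :=
  if h : m < l then p.1 ⟨m, h⟩ else 0

theorem extend_succ_le (p : PartLe l) (m : ℕ) : p.extend (m + 1) ≤ p.extend m := by
  unfold extend
  split_ifs with h h'
  · exact p.2 _ _ (Fin.mk_le_mk.mpr m.le_succ)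
  · omega
  all_goals exact Nat.zero_le _

def ofDiff (d : Fin l → ℕ) : PartLe l :=
  ⟨fun j => suffixSum d j, fun _ _ h => suffixSum_antitone d h⟩

theorem extend_ofDiff (d : Fin l → ℕ) (m : ℕ) : (ofDiff d).extend m = suffixSum d m := by
  unfold extend
  split_ifs with h
  · rfl
  · exact (suffixSum_eq_zero_of_le d (not_lt.mp h)).symm

theorem suffixSum_extend_sub (p : PartLe l) (m : ℕ) :
    suffixSum (fun k : Fin l => p.extend k - p.extend (k + 1)) m = p.extend m := by
  induction hn : l - m generalizing m with
  | zero => rw [suffixSum_eq_zero_of_le _ (by omega), extend, dif_neg (by omega)]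
  | succ n ih =>
    rw [suffixSum_eq_add_of_lt _ (by omega), ih (m + 1) (by omega)]
    have := p.extend_succ_le m
    dsimp only
    omega

def diffEquiv (l : ℕ) : (Fin l → ℕ) ≃ PartLe l where
  toFun := ofDiff
  invFun p k := p.extend k - p.extend (k + 1)
  left_inv d := by
    funext k
    show (ofDiff d).extend k - (ofDiff d).extend (k + 1) = d k
    rw [extend_ofDiff, extend_ofDiff, suffixSum_eq_add_of_lt d k.isLt, Fin.eta]
    omega
  right_inv p := by
    apply Subtype.ext
    funext j
    show suffixSum (fun k : Fin l => p.extend k - p.extend (k + 1)) j = p.1 j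
    rw [suffixSum_extend_sub, extend, dif_pos j.isLt]

theorem pow_sum_mul_pow_diffEquiv {M : Type*} [CommMonoid M] (q t : M) (d : Fin l → ℕ)
    (a : Fin l) :
    q ^ (∑ j, (diffEquiv l d).1 j) * t ^ (diffEquiv l d).1 a =
      ∏ k, (q ^ (k.val + 1) * if a.val ≤ k.val then t else 1) ^ d k := by
  show q ^ (∑ j : Fin l, suffixSum d j) * t ^ suffixSum d a = _
  rw [sum_suffixSum, pow_suffixSum, ← Finset.prod_pow_eq_pow_sum, ← Finset.prod_mul_distrib]
  simp only [mul_pow, pow_mul]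

end PartLe

end Partitions

theorem stmt6 (q t : ℂ) (hq : ‖q‖ < 1) (ht : ‖t‖ < 1) (i l : ℕ)
    (hi : 1 ≤ i) (hil : i ≤ l) :
    ∑' p : PartLe l, q ^ (∑ j, p.1 j) * t ^ (p.1 ⟨i - 1, by omega⟩) =
      1 /
        ((∏ j ∈ Finset.range (i - 1), (1 - q ^ (j + 1))) *
          ∏ j ∈ Finset.Icc i l, (1 - q ^ j * t)) := by
  set x : Fin l → ℂ := fun k => q ^ (k.val + 1) * if i - 1 ≤ k.val then t else 1
  have hx : ∀ k, ‖x k‖ < 1 := fun k => by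
    rw [norm_mul, norm_pow]
    refine mul_lt_one_of_nonneg_of_lt_one_left (by positivity)
      (pow_lt_one₀ (norm_nonneg _) hq (by omega)) ?_
    split_ifs <;> simp [ht.le]
  rw [← (PartLe.diffEquiv l).tsum_eq,
    tsum_congr fun d => PartLe.pow_sum_mul_pow_diffEquiv q t d ⟨i - 1, by omega⟩,
    tsum_prod_pow x hx, Finset.prod_inv_distrib,
    Fin.prod_univ_eq_prod_range (fun k => 1 - q ^ (k + 1) * if i - 1 ≤ k then t else 1),
    prod_range_one_sub_pow_mul_ite q t (by omega : i - 1 ≤ l), Nat.sub_add_cancel hi, one_div]
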